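/- arXiv:1507.00988 — 4 statements merged into one kernel-verified Lean document; each statement's English description precedes it below -/
import Mathlib

section
/- Let q = p^e be a prime power, ψ : 𝔽_q → ℂ* a nontrivial additive character, d a positive divisor of q−1, γ a primitive element of 𝔽_q, C₀ the subgroup of nonzero d-th powers in 𝔽_q^*, and C_i = γ^i C₀ for 0 ≤ i ≤ d−1. Let g : 𝔽_q → 𝔽_q be defined by g(0) = 0 and g(x) = a_i x^{r_i} for x ∈ C_i, where a_i ∈ 𝔽_q and r_i are positive integers with gcd(r_i, p) = 1. Set L = { 0 ≤ i ≤ d−1 : a_i ≠ 0 } and n₀ = d − |L|. Then | Σ_{x ∈ 𝔽_q} ψ(g(x)) − (q/d)·n₀ | ≤ (d − n₀) · max_{i ∈ L} gcd(r_i, (q−1)/d) · √q. -/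
open Polynomial Finset

lemma cyclic_card_pow_eq_one {G : Type*} [CommGroup G] [Fintype G] [DecidableEq G] [IsCyclic G]
    {n : ℕ} (hn : 0 < n) (hdvd : n ∣ Fintype.card G) :
    (univ.filter (fun x : G => x ^ n = 1)).card = n := by
  refine le_antisymm (IsCyclic.card_pow_eq_one_le hn) ?_
  obtain ⟨a, ha⟩ : ∃ a : G, orderOf a = n := by
    obtain ⟨σ, hσ⟩ := IsCyclic.exists_generator (α := G)
    have hσc : orderOf σ = Fintype.card G := by
      rw [orderOf_eq_card_of_forall_mem_zpowers hσ, Nat.card_eq_fintype_card]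
    refine ⟨σ ^ (Fintype.card G / n), ?_⟩
    rw [orderOf_pow, hσc, Nat.gcd_eq_right (Nat.div_dvd_of_dvd hdvd),
      Nat.div_div_self hdvd Fintype.card_ne_zero]
  have himage : ((Finset.range n).image (fun k => a ^ k)).card = n := by
    rw [Finset.card_image_of_injOn, Finset.card_range]
    intro i hi j hj hij
    exact pow_injOn_Iio_orderOf (by simpa [ha] using hi) (by simpa [ha] using hj) hij
  refine le_trans (le_of_eq himage.symm) (Finset.card_le_card ?_)
  intro x hx
  simp only [Finset.mem_image, Finset.mem_range, Finset.mem_filter, Finset.mem_univ,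
    true_and] at hx ⊢
  obtain ⟨k, -, rfl⟩ := hx
  rw [← pow_mul, mul_comm, pow_mul, ← ha, pow_orderOf_eq_one, one_pow]

lemma cyclic_card_pow_eq_one' {G : Type*} [CommGroup G] [Fintype G] [DecidableEq G] [IsCyclic G]
    {n : ℕ} (hn : 0 < n) :
    (univ.filter (fun x : G => x ^ n = 1)).card = Nat.gcd n (Fintype.card G) := by
  have hfil : (univ.filter (fun x : G => x ^ n = 1)) =
      (univ.filter (fun x : G => x ^ Nat.gcd n (Fintype.card G) = 1)) := by
    apply Finset.filter_congr
    intro x _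
    rw [← orderOf_dvd_iff_pow_eq_one, ← orderOf_dvd_iff_pow_eq_one]
    exact ⟨fun h => Nat.dvd_gcd h orderOf_dvd_card,
      fun h => h.trans (Nat.gcd_dvd_left _ _)⟩
  rw [hfil, cyclic_card_pow_eq_one (Nat.gcd_pos_of_pos_left _ hn) (Nat.gcd_dvd_right _ _)]

lemma card_pow_fiber {G : Type*} [CommGroup G] [Fintype G] [DecidableEq G] [IsCyclic G]
    {n : ℕ} (hn : 0 < n) (c : G) :
    (univ.filter (fun y : G => y ^ n = c)).card =
      if ∃ u : G, u ^ n = c then Nat.gcd n (Fintype.card G) else 0 := by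
  split_ifs with h
  · obtain ⟨u, rfl⟩ := h
    rw [← cyclic_card_pow_eq_one' hn]
    apply Finset.card_bij' (fun y _ => u⁻¹ * y) (fun y _ => u * y)
    · intro y hy
      simp only [mem_filter, mem_univ, true_and] at hy ⊢
      rw [mul_pow, hy, inv_pow, inv_mul_cancel]
    · intro y hy
      simp only [mem_filter, mem_univ, true_and] at hy ⊢
      rw [mul_pow, hy, mul_one]
    · intro y _; simp
    · intro y _; simp
  · rw [Finset.card_eq_zero, Finset.filter_eq_empty_iff]
    exact fun {y} _ hy => h ⟨y, hy⟩


lemma abs_gaussSum_of_ne_one {F : Type*} [Field F] [Fintype F] [DecidableEq F]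
    {χ : MulChar F ℂ} (hχ : χ ≠ 1) {ψ : AddChar F ℂ} (hψ : ψ.IsPrimitive) :
    ‖gaussSum χ ψ‖ = Real.sqrt (Fintype.card F) := by
  have hchar : 0 < ringChar F := (CharP.char_is_prime F (ringChar F)).pos
  have hconj : (starRingEnd ℂ) (gaussSum χ ψ) = gaussSum χ⁻¹ ψ⁻¹ := by
    rw [gaussSum, gaussSum, map_sum]
    refine Finset.sum_congr rfl fun t _ => ?_
    rw [map_mul]
    congr 1
    · exact χ.star_apply' t
    · exact AddChar.starComp_apply hchar t
  have h := gaussSum_mul_gaussSum_eq_card hχ hψ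
  rw [← hconj, Complex.mul_conj] at h
  have h2 : Complex.normSq (gaussSum χ ψ) = (Fintype.card F : ℝ) := by
    exact_mod_cast h
  rw [Complex.norm_def, h2]

noncomputable local instance instFintypeMulChar (F : Type*) [Field F] [Fintype F] :
    Fintype (MulChar F ℂ) := Fintype.ofFinite _

lemma isCyclic_mulChar (F : Type*) [Field F] [Fintype F] [DecidableEq F] :
    IsCyclic (MulChar F ℂ) := by
  haveI : NeZero (Fintype.card Fˣ) := ⟨Fintype.card_ne_zero⟩
  exact isCyclic_of_surjective _ (MulChar.equiv_rootsOfUnity F ℂ).symm.surjective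

lemma card_mulChar (F : Type*) [Field F] [Fintype F] [DecidableEq F] :
    Fintype.card (MulChar F ℂ) = Fintype.card F - 1 := by
  haveI : NeZero (Fintype.card Fˣ) := ⟨Fintype.card_ne_zero⟩
  rw [Fintype.card_eq_nat_card, Nat.card_congr (MulChar.equiv_rootsOfUnity F ℂ).toEquiv,
    Complex.card_rootsOfUnity, Fintype.card_units]

open scoped Classical in
lemma card_mulChar_pow_eq_one {F : Type*} [Field F] [Fintype F] [DecidableEq F]
    {n : ℕ} (hn : 0 < n) :
    (univ.filter (fun χ : MulChar F ℂ => χ ^ n = 1)).card = Nat.gcd n (Fintype.card F - 1) := by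
  haveI := isCyclic_mulChar F
  rw [cyclic_card_pow_eq_one' hn, card_mulChar]

lemma exists_mulChar_ne_one {F : Type*} [Field F] [Fintype F] [DecidableEq F]
    {n : ℕ} (hn : 0 < n) {t : Fˣ} (ht : ¬ ∃ u : Fˣ, u ^ n = t) :
    ∃ χ : MulChar F ℂ, χ ^ n = 1 ∧ χ (t : F) ≠ 1 := by
  set q1 := Fintype.card Fˣ with hq1
  set m := Nat.gcd n q1 with hm
  have hm0 : 0 < m := Nat.gcd_pos_of_pos_left _ hn
  have hmn : m ∣ n := Nat.gcd_dvd_left _ _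
  have hmq : m ∣ q1 := Nat.gcd_dvd_right _ _
  obtain ⟨γ, hγ⟩ := IsCyclic.exists_generator (α := Fˣ)
  have hζ := Complex.isPrimitiveRoot_exp m hm0.ne'
  set z : ℂ := Complex.exp (2 * Real.pi * Complex.I / m) with hz
  set ζ : ℂˣ := (hζ.isUnit hm0.ne').unit with hζdef
  have hζval : (ζ : ℂ) = z := rfl
  have hζmem : ζ ∈ rootsOfUnity q1 ℂ := by
    rw [mem_rootsOfUnity]
    ext
    push_cast
    rw [hζval]
    obtain ⟨k, hk⟩ := hmq
    rw [hk, pow_mul, hζ.pow_eq_one, one_pow]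
  set χ := MulChar.ofRootOfUnity hζmem hγ with hχ
  have hspec : χ (γ : F) = z := by
    have := MulChar.ofRootOfUnity_spec hζmem hγ
    rw [← hχ] at this
    rw [this, hζval]
  obtain ⟨s, hs⟩ : ∃ s : ℕ, γ ^ s = t := by
    have h1 := hγ t
    rwa [← mem_powers_iff_mem_zpowers, Submonoid.mem_powers_iff] at h1
  have hχt : χ (t : F) = z ^ s := by
    rw [← hs, Units.val_pow_eq_pow_val, map_pow, hspec]
  have hms : ¬ (m ∣ s) := by
    rintro ⟨k, hk⟩
    apply ht
    have hbez : (m : ℤ) = n * Nat.gcdA n q1 + q1 * Nat.gcdB n q1 := Nat.gcd_eq_gcd_ab n q1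
    set a : ℤ := Nat.gcdA n q1
    have hγm : γ ^ (m : ℤ) = (γ ^ a) ^ (n : ℤ) := by
      rw [hbez, zpow_add]
      have h1 : γ ^ ((q1 : ℤ) * Nat.gcdB n q1) = 1 := by
        rw [zpow_mul, zpow_natCast, hq1, pow_card_eq_one, one_zpow]
      rw [h1, mul_one, mul_comm (n : ℤ), zpow_mul]
    refine ⟨(γ ^ a) ^ (k : ℤ), ?_⟩
    have : ((γ ^ a) ^ (k : ℤ)) ^ (n : ℤ) = t := by
      rw [← zpow_mul, mul_comm, zpow_mul, ← hγm, ← zpow_mul,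
        show (m : ℤ) * k = ((m * k : ℕ) : ℤ) by push_cast; ring, zpow_natCast, ← hk, hs]
    rw [← zpow_natCast ((γ ^ a) ^ (k:ℤ)) n]
    exact this
  refine ⟨χ, ?_, ?_⟩
  · rw [MulChar.eq_iff hγ, MulChar.pow_apply' _ hn.ne', hspec, MulChar.one_apply_coe]
    obtain ⟨k, hk⟩ := hmn
    rw [hk, pow_mul, hζ.pow_eq_one, one_pow]
  · rw [hχt]
    intro hcon
    exact hms ((hζ.pow_eq_one_iff_dvd s).mp hcon)

lemma sum_units_eq {F : Type*} [Field F] [Fintype F] [DecidableEq F] {M : Type*}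
    [AddCommMonoid M] (f : F → M) :
    ∑ y : F, f y = f 0 + ∑ u : Fˣ, f u := by
  have h : ∑ u : Fˣ, f u = ∑ y ∈ univ.filter (fun y : F => y ≠ 0), f y := by
    refine Finset.sum_nbij' (i := fun u => (u : F))
      (j := fun y => if hy : y = 0 then 1 else Units.mk0 y hy) ?_ ?_ ?_ ?_ ?_
    · intro u _; simp [Units.ne_zero u]
    · intro y hy; simp
    · intro u _
      simp only [dif_neg (Units.ne_zero u)]
      exact Units.ext rfl
    · intro y hy
      simp only [mem_filter, mem_univ, true_and] at hy
      simp only [dif_neg hy, Units.val_mk0]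
    · intro u _; rfl
  rw [h, ← Finset.sum_filter_add_sum_filter_not univ (fun y : F => y = 0)]
  rw [Finset.filter_eq', if_pos (mem_univ 0), Finset.sum_singleton]

open scoped Classical in
lemma sum_mulChar_eq_card_fiber {F : Type*} [Field F] [Fintype F] [DecidableEq F]
    {n : ℕ} (hn : 0 < n) (t : Fˣ) :
    ∑ χ ∈ univ.filter (fun χ : MulChar F ℂ => χ ^ n = 1), χ (t : F) =
      ((univ.filter (fun y : Fˣ => y ^ n = t)).card : ℂ) := by
  by_cases h : ∃ u : Fˣ, u ^ n = t
  · have hLHS : ∀ χ ∈ univ.filter (fun χ : MulChar F ℂ => χ ^ n = 1), χ (t : F) = 1 := by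
      intro χ hχ
      rw [mem_filter] at hχ
      obtain ⟨u, rfl⟩ := h
      rw [Units.val_pow_eq_pow_val, map_pow, ← MulChar.pow_apply' χ hn.ne', hχ.2,
        MulChar.one_apply_coe]
    rw [Finset.sum_congr rfl hLHS, Finset.sum_const, nsmul_eq_mul, mul_one,
      card_mulChar_pow_eq_one hn, card_pow_fiber hn t, if_pos h, Fintype.card_units]
  · obtain ⟨χ₀, hχ₀n, hχ₀t⟩ := exists_mulChar_ne_one hn h
    have hfiber : (univ.filter (fun y : Fˣ => y ^ n = t)) = ∅ := by
      rw [Finset.filter_eq_empty_iff]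
      exact fun {y} _ hy => h ⟨y, hy⟩
    rw [hfiber]
    simp only [Finset.card_empty, Nat.cast_zero]
    set S := univ.filter (fun χ : MulChar F ℂ => χ ^ n = 1) with hS
    have hbij : ∑ χ ∈ S, χ (t : F) = ∑ χ ∈ S, (χ₀ * χ) (t : F) := by
      refine Finset.sum_nbij' (i := fun χ => χ₀⁻¹ * χ) (j := fun χ => χ₀ * χ) ?_ ?_ ?_ ?_ ?_
      · intro χ hχ
        simp only [hS, mem_filter, mem_univ, true_and] at hχ ⊢
        rw [mul_pow, hχ, inv_pow, hχ₀n, mul_one, inv_one]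
      · intro χ hχ
        simp only [hS, mem_filter, mem_univ, true_and] at hχ ⊢
        rw [mul_pow, hχ, hχ₀n, mul_one]
      · intro χ _; simp [← mul_assoc]
      · intro χ _; simp [← mul_assoc]
      · intro χ _; simp [← mul_assoc]
    have hmul : ∑ χ ∈ S, (χ₀ * χ) (t : F) = χ₀ (t : F) * ∑ χ ∈ S, χ (t : F) := by
      rw [Finset.mul_sum]
      refine Finset.sum_congr rfl fun χ _ => ?_
      rw [MulChar.coeToFun_mul, Pi.mul_apply]
    have : (1 - χ₀ (t : F)) * ∑ χ ∈ S, χ (t : F) = 0 := by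
      rw [sub_mul, one_mul, ← hmul, ← hbij, sub_self]
    rcases mul_eq_zero.mp this with h1 | h2
    · exact absurd (by linear_combination -h1 : χ₀ (t : F) = 1) hχ₀t
    · exact h2

open scoped Classical in
lemma sum_addChar_pow_eq {F : Type*} [Field F] [Fintype F] [DecidableEq F]
    {ψ : AddChar F ℂ} (hψ : ψ ≠ 1) {n : ℕ} (hn : 0 < n) :
    ∑ y : F, ψ (y ^ n) =
      ∑ χ ∈ (univ.filter (fun χ : MulChar F ℂ => χ ^ n = 1)).erase 1, gaussSum χ ψ := by
  set S := univ.filter (fun χ : MulChar F ℂ => χ ^ n = 1) with hS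
  have h1S : (1 : MulChar F ℂ) ∈ S := by simp [hS]
  have hsum0 : ∑ y : F, ψ y = 0 := AddChar.sum_eq_zero_of_ne_one hψ
  have hsumu : ∑ u : Fˣ, ψ (u : F) = -1 := by
    have h := sum_units_eq (fun y : F => ψ y)
    rw [hsum0, AddChar.map_zero_eq_one] at h
    linear_combination -h
  have hgauss1 : gaussSum (1 : MulChar F ℂ) ψ = -1 := by
    rw [gaussSum, sum_units_eq (fun t : F => (1 : MulChar F ℂ) t * ψ t),
      MulChar.map_nonunit _ not_isUnit_zero, zero_mul, zero_add]
    calc ∑ u : Fˣ, (1 : MulChar F ℂ) (u : F) * ψ (u : F) = ∑ u : Fˣ, ψ (u : F) := by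
          refine Finset.sum_congr rfl fun u _ => ?_
          rw [MulChar.one_apply_coe, one_mul]
      _ = -1 := hsumu
  have hLHS : ∑ y : F, ψ (y ^ n) = 1 + ∑ u : Fˣ, ψ ((u : F) ^ n) := by
    rw [sum_units_eq (fun y : F => ψ (y ^ n)), zero_pow hn.ne', AddChar.map_zero_eq_one]
  have hfib : ∑ u : Fˣ, ψ ((u : F) ^ n) =
      ∑ t : Fˣ, ((univ.filter (fun y : Fˣ => y ^ n = t)).card : ℂ) * ψ (t : F) := by
    rw [← Finset.sum_fiberwise univ (fun y : Fˣ => y ^ n) (fun y : Fˣ => ψ ((y : F) ^ n))]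
    refine Finset.sum_congr rfl fun t _ => ?_
    have hinner : ∀ y ∈ univ.filter (fun y : Fˣ => y ^ n = t),
        ψ ((y : F) ^ n) = ψ (t : F) := by
      intro y hy
      rw [mem_filter] at hy
      rw [← Units.val_pow_eq_pow_val, hy.2]
    rw [Finset.sum_congr rfl hinner, Finset.sum_const, nsmul_eq_mul]
  have hRHS : ∑ χ ∈ S, gaussSum χ ψ =
      ∑ t : Fˣ, ((univ.filter (fun y : Fˣ => y ^ n = t)).card : ℂ) * ψ (t : F) := by
    have hswap : ∑ χ ∈ S, gaussSum χ ψ = ∑ t : F, (∑ χ ∈ S, χ t) * ψ t := by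
      simp_rw [gaussSum, Finset.sum_mul]
      rw [Finset.sum_comm]
    rw [hswap, sum_units_eq (fun t : F => (∑ χ ∈ S, χ t) * ψ t)]
    have hzero : (∑ χ ∈ S, χ (0 : F)) = 0 :=
      Finset.sum_eq_zero fun χ _ => MulChar.map_nonunit χ not_isUnit_zero
    rw [hzero, zero_mul, zero_add]
    exact Finset.sum_congr rfl fun t _ => by rw [sum_mulChar_eq_card_fiber hn t]
  have hsplit := Finset.add_sum_erase S (fun χ => gaussSum χ ψ) h1S
  rw [hgauss1] at hsplit
  rw [hLHS, hfib]
  linear_combination -hsplit - hRHS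

open scoped Classical in
lemma weil_bound_pow {F : Type*} [Field F] [Fintype F] [DecidableEq F]
    {ψ : AddChar F ℂ} (hψ : ψ ≠ 1) {n : ℕ} (hn : 0 < n) :
    ‖∑ y : F, ψ (y ^ n)‖ ≤
      ((Nat.gcd n (Fintype.card F - 1) - 1 : ℕ) : ℝ) * Real.sqrt (Fintype.card F) := by
  rw [sum_addChar_pow_eq hψ hn]
  set S := univ.filter (fun χ : MulChar F ℂ => χ ^ n = 1) with hS
  have h1S : (1 : MulChar F ℂ) ∈ S := by simp [hS]
  have hψp : ψ.IsPrimitive := AddChar.IsPrimitive.of_ne_one hψ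
  calc ‖∑ χ ∈ S.erase 1, gaussSum χ ψ‖
      ≤ ∑ χ ∈ S.erase 1, ‖gaussSum χ ψ‖ := norm_sum_le _ _
    _ = ∑ χ ∈ S.erase 1, Real.sqrt (Fintype.card F) := by
        refine Finset.sum_congr rfl fun χ hχ => ?_
        exact abs_gaussSum_of_ne_one (Finset.ne_of_mem_erase hχ) hψp
    _ = ((S.erase 1).card : ℝ) * Real.sqrt (Fintype.card F) := by
        rw [Finset.sum_const, nsmul_eq_mul]
    _ = ((Nat.gcd n (Fintype.card F - 1) - 1 : ℕ) : ℝ) * Real.sqrt (Fintype.card F) := by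
        rw [Finset.card_erase_of_mem h1S, card_mulChar_pow_eq_one hn]

lemma sum_comp_const_fiber {α β M : Type*} [Fintype α] [Fintype β] [DecidableEq β]
    [AddCommMonoid M] (π : α → β) (f : β → M) (k : ℕ)
    (h : ∀ b : β, (univ.filter fun a => π a = b).card = k) :
    ∑ a : α, f (π a) = k • ∑ b : β, f b := by
  rw [← Finset.sum_fiberwise univ π (fun a => f (π a)), Finset.smul_sum]
  refine Finset.sum_congr rfl fun b _ => ?_
  have hc : ∀ a ∈ univ.filter fun a => π a = b, f (π a) = f b := by
    intro a ha; rw [(mem_filter.mp ha).2]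
  rw [Finset.sum_congr rfl hc, Finset.sum_const, h b]

lemma pow_d_mem_iff {F : Type*} [Field F] [Fintype F] [DecidableEq F] {d : ℕ}
    (hddvd : d ∣ Fintype.card Fˣ) {γ : Fˣ} (hγ : ∀ x : Fˣ, x ∈ Subgroup.zpowers γ)
    (m : ℤ) : (∃ u : Fˣ, u ^ d = γ ^ m) ↔ (d : ℤ) ∣ m := by
  have horder : orderOf γ = Fintype.card Fˣ := by
    rw [orderOf_eq_card_of_forall_mem_zpowers hγ, Nat.card_eq_fintype_card]
  constructor
  · rintro ⟨u, hu⟩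
    obtain ⟨j, hj⟩ := Subgroup.mem_zpowers_iff.mp (hγ u)
    rw [← hj, ← zpow_natCast (γ ^ j) d, ← zpow_mul] at hu
    have h1 : γ ^ (j * d - m) = 1 := by
      rw [zpow_sub, hu]
      exact mul_inv_cancel _
    have h2 : ((Fintype.card Fˣ : ℕ) : ℤ) ∣ (j * d - m) := by
      rw [← horder]
      exact orderOf_dvd_iff_zpow_eq_one.mpr h1
    have h3 : (d : ℤ) ∣ j * d - m := dvd_trans (Int.natCast_dvd_natCast.mpr hddvd) h2
    have h4 : (d : ℤ) ∣ j * d := dvd_mul_left _ _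
    have h5 := dvd_sub h4 h3
    rwa [sub_sub_cancel] at h5
  · rintro ⟨k, rfl⟩
    exact ⟨γ ^ k, by rw [← zpow_natCast (γ ^ k) d, ← zpow_mul, mul_comm]⟩

lemma fiber_card_d {F : Type*} [Field F] [Fintype F] [DecidableEq F] {d : ℕ} (hd : 0 < d)
    (hddvd : d ∣ Fintype.card Fˣ) {γ : Fˣ} (hγ : ∀ x : Fˣ, x ∈ Subgroup.zpowers γ) (x : Fˣ) :
    (univ.filter fun p : Fin d × Fˣ => γ ^ (p.1 : ℕ) * p.2 ^ d = x).card = d := by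
  obtain ⟨s, hs⟩ : ∃ s : ℕ, γ ^ s = x := by
    have h1 := hγ x
    rwa [← mem_powers_iff_mem_zpowers, Submonoid.mem_powers_iff] at h1
  rw [Finset.card_eq_sum_card_fiberwise
    (f := Prod.fst) (t := univ) (fun p _ => mem_univ p.1)]
  have hstep : ∀ i : Fin d,
      ((univ.filter fun p : Fin d × Fˣ => γ ^ (p.1 : ℕ) * p.2 ^ d = x).filter
        (fun p => p.1 = i)).card =
      (if (d : ℤ) ∣ ((s : ℤ) - ((i : ℕ) : ℤ)) then d else 0) := by
    intro i
    have hbij : ((univ.filter fun p : Fin d × Fˣ => γ ^ (p.1 : ℕ) * p.2 ^ d = x).filter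
        (fun p => p.1 = i)).card =
        (univ.filter fun y : Fˣ => y ^ d = (γ ^ (i : ℕ))⁻¹ * x).card := by
      refine Finset.card_nbij' (i := fun p => p.2) (j := fun y => (i, y)) ?_ ?_ ?_ ?_
      · intro p hp
        simp only [Finset.mem_coe, mem_filter, mem_univ, true_and] at hp ⊢
        obtain ⟨h1, h2⟩ := hp
        rw [eq_inv_mul_iff_mul_eq, ← h2, h1]
      · intro y hy
        simp only [Finset.mem_coe, mem_filter, mem_univ, true_and, and_true] at hy ⊢
        rw [eq_inv_mul_iff_mul_eq] at hy
        exact hy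
      · intro p hp
        simp only [Finset.mem_coe, mem_filter, mem_univ, true_and] at hp
        exact Prod.ext hp.2.symm rfl
      · intro y _; rfl
    rw [hbij, card_pow_fiber hd, Nat.gcd_eq_left hddvd]
    have hc : (γ ^ (i : ℕ))⁻¹ * x = γ ^ ((s : ℤ) - ((i : ℕ) : ℤ)) := by
      rw [← hs, ← zpow_natCast γ s, ← zpow_natCast γ (i : ℕ), ← zpow_neg, ← zpow_add,
        add_comm, ← sub_eq_add_neg]
    rw [hc]
    by_cases hdvd : (d : ℤ) ∣ ((s : ℤ) - ((i : ℕ) : ℤ))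
    · rw [if_pos hdvd, if_pos ((pow_d_mem_iff hddvd hγ _).mpr hdvd)]
    · rw [if_neg hdvd, if_neg (fun hcon => hdvd ((pow_d_mem_iff hddvd hγ _).mp hcon))]
  rw [Finset.sum_congr rfl (fun i _ => hstep i)]
  have hfil : (univ.filter fun i : Fin d => (d : ℤ) ∣ ((s : ℤ) - ((i : ℕ) : ℤ))) =
      {(⟨s % d, Nat.mod_lt s hd⟩ : Fin d)} := by
    ext i
    simp only [mem_filter, mem_univ, true_and, Finset.mem_singleton]
    constructor
    · intro hdv
      have hmod : ((i : ℕ) : ℤ) % (d : ℤ) = (s : ℤ) % (d : ℤ) := Int.modEq_iff_dvd.mpr hdv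
      have h1 : ((i : ℕ) : ℤ) % (d : ℤ) = ((i : ℕ) : ℤ) :=
        Int.emod_eq_of_lt (by positivity) (by exact_mod_cast i.isLt)
      have h2 : ((i : ℕ) : ℤ) = ((s % d : ℕ) : ℤ) := by
        rw [← h1, hmod]; push_cast; ring
      exact Fin.ext (by exact_mod_cast h2)
    · rintro rfl
      refine ⟨(s / d : ℕ), ?_⟩
      have hnat := Nat.div_add_mod s d
      have h2 : ((d : ℤ)) * ((s / d : ℕ) : ℤ) + ((s % d : ℕ) : ℤ) = (s : ℤ) := by
        exact_mod_cast hnat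
      show (s : ℤ) - ((s % d : ℕ) : ℤ) = (d : ℤ) * ((s / d : ℕ) : ℤ)
      linarith [h2]
  rw [Finset.sum_ite, Finset.sum_const, Finset.sum_const_zero, add_zero, hfil,
    Finset.card_singleton, one_smul]

lemma sum_cosets {F : Type*} [Field F] [Fintype F] [DecidableEq F] {d : ℕ} (hd : 0 < d)
    (hddvd : d ∣ Fintype.card Fˣ) {γ : Fˣ} (hγ : ∀ x : Fˣ, x ∈ Subgroup.zpowers γ)
    (f : Fˣ → ℂ) :
    ∑ i ∈ Finset.range d, ∑ y : Fˣ, f (γ ^ i * y ^ d) = (d : ℂ) * ∑ x : Fˣ, f x := by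
  have h1 : ∑ i ∈ Finset.range d, ∑ y : Fˣ, f (γ ^ i * y ^ d)
      = ∑ p : Fin d × Fˣ, f (γ ^ (p.1 : ℕ) * p.2 ^ d) := by
    rw [Fintype.sum_prod_type]
    exact (Fin.sum_univ_eq_sum_range (fun i => ∑ y : Fˣ, f (γ ^ i * y ^ d)) d).symm
  rw [h1, sum_comp_const_fiber (fun p : Fin d × Fˣ => γ ^ (p.1 : ℕ) * p.2 ^ d) f d
    (fiber_card_d hd hddvd hγ), nsmul_eq_mul]

/-- Theorem 1.2, second part: for `g(0) = 0`, `g(x) = aᵢ x^{rᵢ}` for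
`x ∈ Cᵢ = γⁱC₀`, with `rᵢ` positive and coprime to `p`,
`|∑_x ψ(g(x)) - (q/d)·n₀| ≤ (d - n₀)·max_{i ∈ L} gcd(rᵢ, (q-1)/d)·√q`. -/
theorem index_bound_monomial_cyclotomic_mapping
    {p e : ℕ} (hp : p.Prime) (he : 0 < e)
    {F : Type*} [Field F] [Fintype F] [DecidableEq F]
    (hF : Fintype.card F = p ^ e)
    (ψ : AddChar F ℂ) (hψ : ψ ≠ 1)
    (d : ℕ) (hd : 0 < d) (hddvd : d ∣ p ^ e - 1)
    (γ : F) (hγ : IsPrimitiveRoot γ (p ^ e - 1))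
    (a : ℕ → F) (r : ℕ → ℕ)
    (hrpos : ∀ i < d, 0 < r i) (hrp : ∀ i < d, Nat.gcd (r i) p = 1)
    (g : F → F) (hg0 : g 0 = 0)
    (hg : ∀ i < d, ∀ x : F, (∃ y : F, y ≠ 0 ∧ x = γ ^ i * y ^ d) →
      g x = a i * x ^ r i)
    (L : Finset ℕ) (hL : L = (Finset.range d).filter (fun i => a i ≠ 0))
    (n₀ : ℕ) (hn₀ : n₀ = d - L.card) :
    ‖(∑ x : F, ψ (g x) - (p ^ e : ℂ) / (d : ℂ) * (n₀ : ℂ))‖ ≤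
      ((d : ℝ) - (n₀ : ℝ)) *
        ((L.sup (fun i => Nat.gcd (r i) ((p ^ e - 1) / d)) : ℕ) : ℝ) *
        Real.sqrt (p ^ e) := by
  classical
  have hq2 : 2 ≤ p ^ e := by
    calc 2 ≤ p := hp.two_le
    _ ≤ p ^ e := Nat.le_self_pow he.ne' p
  have hq1pos : 0 < p ^ e - 1 := by omega
  have hcardU : Fintype.card Fˣ = p ^ e - 1 := by rw [Fintype.card_units, hF]
  have hγu : IsUnit γ := hγ.isUnit hq1pos.ne'
  have hγval : ((hγu.unit : Fˣ) : F) = γ := hγu.unit_spec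
  have hγprim : IsPrimitiveRoot (hγu.unit) (p ^ e - 1) := hγ.isUnit_unit hq1pos.ne'
  have horder : orderOf (hγu.unit) = p ^ e - 1 := (IsPrimitiveRoot.eq_orderOf hγprim).symm
  have hgen : ∀ x : Fˣ, x ∈ Subgroup.zpowers hγu.unit := by
    have hcard : Nat.card (Subgroup.zpowers hγu.unit) = Nat.card Fˣ := by
      rw [Nat.card_zpowers, horder, Nat.card_eq_fintype_card, hcardU]
    have htop := Subgroup.eq_top_of_card_eq _ hcard
    intro x
    rw [htop]
    trivial
  have hddvdU : d ∣ Fintype.card Fˣ := by rw [hcardU]; exact hddvd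
  have hℓd : L.card ≤ d := by
    rw [hL]
    exact (Finset.card_filter_le _ _).trans (by rw [Finset.card_range])
  set T := ∑ u : Fˣ, ψ (g (u : F)) with hT
  have hsplit : ∑ x : F, ψ (g x) = 1 + T := by
    rw [sum_units_eq (fun y : F => ψ (g y)), hg0, AddChar.map_zero_eq_one]
  obtain ⟨B, hBdef⟩ : ∃ B : ℕ → ℂ,
      ∀ i, B i = ∑ y : F, (ψ.mulShift (a i * γ ^ (i * r i))) (y ^ (d * r i)) :=
    ⟨_, fun i => rfl⟩
  have hcoe : ∀ (i : ℕ) (y : Fˣ), ((hγu.unit ^ i * y ^ d : Fˣ) : F) = γ ^ i * (y : F) ^ d := by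
    intro i y
    rw [Units.val_mul, Units.val_pow_eq_pow_val, Units.val_pow_eq_pow_val, hγval]
  have hgval : ∀ i, i < d → ∀ y : Fˣ,
      g (γ ^ i * (y : F) ^ d) = a i * γ ^ (i * r i) * (y : F) ^ (d * r i) := by
    intro i hi y
    rw [hg i hi _ ⟨(y : F), Units.ne_zero y, rfl⟩, mul_pow, ← pow_mul, ← pow_mul, mul_assoc]
  have hinner : ∀ i ∈ Finset.range d,
      (∑ y : Fˣ, ψ (g ((hγu.unit ^ i * y ^ d : Fˣ) : F))) =
        if a i ≠ 0 then B i - 1 else ((p ^ e - 1 : ℕ) : ℂ) := by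
    intro i hi
    rw [Finset.mem_range] at hi
    split_ifs with ha0
    · have hBi : B i = 1 + ∑ y : Fˣ, ψ (g ((hγu.unit ^ i * y ^ d : Fˣ) : F)) := by
        rw [hBdef i]
        rw [sum_units_eq (fun y : F => (ψ.mulShift (a i * γ ^ (i * r i))) (y ^ (d * r i)))]
        have h0 : (ψ.mulShift (a i * γ ^ (i * r i))) ((0 : F) ^ (d * r i)) = 1 := by
          rw [zero_pow (Nat.mul_ne_zero hd.ne' (hrpos i hi).ne' : d * r i ≠ 0), AddChar.mulShift_apply, mul_zero,
            AddChar.map_zero_eq_one]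
        rw [h0]
        congr 1
        refine Finset.sum_congr rfl fun y _ => ?_
        rw [AddChar.mulShift_apply, hcoe i y, hgval i hi y]
      rw [hBi]
      ring
    · push_neg at ha0
      have hone : ∀ y ∈ (univ : Finset Fˣ), ψ (g ((hγu.unit ^ i * y ^ d : Fˣ) : F)) = 1 := by
        intro y _
        rw [hcoe i y, hgval i hi y, ha0, zero_mul, zero_mul, AddChar.map_zero_eq_one]
      rw [Finset.sum_congr rfl hone, Finset.sum_const, nsmul_eq_mul, mul_one, ← hcardU,
        Finset.card_univ]
  have hdecomp := sum_cosets hd hddvdU hgen (fun x : Fˣ => ψ (g (x : F)))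
  have hq1c : ((p ^ e - 1 : ℕ) : ℂ) = (p ^ e : ℂ) - 1 := by
    rw [Nat.cast_sub (by omega : 1 ≤ p ^ e)]
    push_cast
    ring
  have hcardcompl : ((Finset.range d).filter (fun i => ¬ (a i ≠ 0))).card = d - L.card := by
    rw [Finset.filter_not, Finset.card_sdiff_of_subset (Finset.filter_subset _ _), Finset.card_range, ← hL]
  have h2 : (d : ℂ) * T = (∑ i ∈ L, B i) - (L.card : ℂ) +
      ((d : ℂ) - (L.card : ℂ)) * ((p ^ e : ℂ) - 1) := by
    rw [← hdecomp, Finset.sum_congr rfl hinner, Finset.sum_ite, ← hL, Finset.sum_sub_distrib,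
      Finset.sum_const, Finset.sum_const, hcardcompl]
    simp only [nsmul_eq_mul, mul_one, hq1c, Nat.cast_sub hℓd]
  have hd0 : (d : ℂ) ≠ 0 := Nat.cast_ne_zero.mpr hd.ne'
  have hn0c : (n₀ : ℂ) = (d : ℂ) - (L.card : ℂ) := by
    rw [hn₀, Nat.cast_sub hℓd]
  have hcancel : (p ^ e : ℂ) / (d : ℂ) * (n₀ : ℂ) * (d : ℂ) = (p ^ e : ℂ) * (n₀ : ℂ) := by
    field_simp
  have hkey : ∑ x : F, ψ (g x) - (p ^ e : ℂ) / (d : ℂ) * (n₀ : ℂ) =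
      (∑ i ∈ L, B i) / (d : ℂ) := by
    rw [eq_div_iff hd0, hsplit]
    linear_combination h2 - hcancel - (p ^ e : ℂ) * hn0c
  rw [hkey, norm_div, Complex.norm_natCast]
  rw [div_le_iff₀ (by exact_mod_cast hd : (0 : ℝ) < (d : ℕ))]
  set G : ℕ := L.sup (fun i => Nat.gcd (r i) ((p ^ e - 1) / d)) with hG
  have hterm : ∀ i ∈ L, ‖B i‖ ≤ ((d : ℝ) * G) * Real.sqrt (p ^ e) := by
    intro i hiL
    rw [hL, Finset.mem_filter, Finset.mem_range] at hiL
    obtain ⟨hid, hai⟩ := hiL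
    have hc0 : a i * γ ^ (i * r i) ≠ 0 := by
      apply mul_ne_zero hai
      exact pow_ne_zero _ hγu.ne_zero
    have hψ' : ψ.mulShift (a i * γ ^ (i * r i)) ≠ 1 :=
      (AddChar.IsPrimitive.of_ne_one hψ) hc0
    have hn : 0 < d * r i := Nat.mul_pos hd (hrpos i hid)
    have hw : ‖B i‖ ≤
        ((Nat.gcd (d * r i) (Fintype.card F - 1) - 1 : ℕ) : ℝ) * Real.sqrt (Fintype.card F) := by
      rw [hBdef i]
      exact weil_bound_pow hψ' hn
    rw [hF] at hw
    push_cast at hw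
    refine hw.trans ?_
    have hgcd : Nat.gcd (d * r i) (p ^ e - 1) = d * Nat.gcd (r i) ((p ^ e - 1) / d) := by
      conv_lhs => rw [show p ^ e - 1 = d * ((p ^ e - 1) / d) from (Nat.mul_div_cancel' hddvd).symm]
      exact Nat.gcd_mul_left d _ _
    have hle : (Nat.gcd (d * r i) (p ^ e - 1) - 1 : ℕ) ≤ d * G := by
      rw [hgcd]
      have hiL' : i ∈ L := by
        rw [hL]
        exact Finset.mem_filter.mpr ⟨Finset.mem_range.mpr hid, hai⟩
      have := Finset.le_sup (f := fun i => Nat.gcd (r i) ((p ^ e - 1) / d)) hiL'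
      calc d * Nat.gcd (r i) ((p ^ e - 1) / d) - 1 ≤ d * Nat.gcd (r i) ((p ^ e - 1) / d) :=
            Nat.sub_le _ _
        _ ≤ d * G := Nat.mul_le_mul_left d this
    have hsq : (0 : ℝ) ≤ Real.sqrt (p ^ e) := Real.sqrt_nonneg _
    have : ((Nat.gcd (d * r i) (p ^ e - 1) - 1 : ℕ) : ℝ) ≤ (d : ℝ) * G := by
      calc ((Nat.gcd (d * r i) (p ^ e - 1) - 1 : ℕ) : ℝ) ≤ ((d * G : ℕ) : ℝ) := by
            exact_mod_cast hle
        _ = (d : ℝ) * G := by push_cast; ring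
    exact mul_le_mul_of_nonneg_right this hsq
  calc ‖∑ i ∈ L, B i‖ ≤ ∑ i ∈ L, ‖B i‖ := norm_sum_le _ _
    _ ≤ ∑ i ∈ L, ((d : ℝ) * G) * Real.sqrt (p ^ e) := Finset.sum_le_sum hterm
    _ = (L.card : ℝ) * (((d : ℝ) * G) * Real.sqrt (p ^ e)) := by
        rw [Finset.sum_const, nsmul_eq_mul]
    _ = ((d : ℝ) - (n₀ : ℝ)) * (G : ℝ) * Real.sqrt (p ^ e) * (d : ℕ) := by
        have : (n₀ : ℝ) = (d : ℝ) - (L.card : ℝ) := by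
          rw [hn₀, Nat.cast_sub hℓd]
        rw [this]
        push_cast
        ring
end

section
/- Let q be a prime power, d a positive divisor of q−1, s = (q−1)/d, γ a primitive element of 𝔽_q, ζ = γ^s (a primitive d-th root of unity), C₀ the subgroup of nonzero d-th powers in 𝔽_q^*, and C_i = γ^i C₀. Let f_i, R_i ∈ 𝔽_q[x] for 0 ≤ i ≤ d−1, and define g(x) = (1/d) Σ_{i=0}^{d−1} Σ_{j=0}^{d−1} ζ^{−ji} x^{j(q−1)/d} f_i(x^{(q−1)/d}) R_i(x). Then for every x ∈ C_i one has g(x) = a_i R_i(x), where a_i = f_i(ζ^i), and if all R_i(0) = 0 then g(0) = 0. -/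
open Polynomial Finset

/-- Equivalence of the polynomial form (4) and the piecewise cyclotomic
definition (5): for `g(x) = (1/d) ∑ᵢ∑ⱼ ζ^{-ji} x^{j(q-1)/d} fᵢ(x^{(q-1)/d}) Rᵢ(x)`
one has `g(x) = aᵢ Rᵢ(x)` for `x ∈ Cᵢ = γⁱC₀` with `aᵢ = fᵢ(ζⁱ)`, and if all
`Rᵢ(0) = 0` then `g(0) = 0`. -/
theorem general_cyclotomic_polynomial_piecewise
    {F : Type*} [Field F] [Fintype F]
    (d : ℕ) (hd : 0 < d) (hddvd : d ∣ Fintype.card F - 1)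
    (s : ℕ) (hs : s = (Fintype.card F - 1) / d)
    (γ : F) (hγ : IsPrimitiveRoot γ (Fintype.card F - 1))
    (ζ : F) (hζ : ζ = γ ^ s)
    (f R : ℕ → F[X])
    (g : F[X])
    (hg : g = C ((d : F)⁻¹) *
      ∑ i ∈ Finset.range d, ∑ j ∈ Finset.range d,
        C ((ζ ^ (j * i))⁻¹) * (X ^ (j * s) * (f i).comp (X ^ s) * R i)) :
    (∀ i < d, ∀ x : F, (∃ y : F, y ≠ 0 ∧ x = γ ^ i * y ^ d) →
      g.eval x = (f i).eval (ζ ^ i) * (R i).eval x) ∧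
    ((∀ i < d, (R i).coeff 0 = 0) → g.eval 0 = 0) := by
  have hq2 : 1 < Fintype.card F := Fintype.one_lt_card
  have hq1 : 0 < Fintype.card F - 1 := by omega
  have hsd : s * d = Fintype.card F - 1 := by
    rw [hs]; exact Nat.div_mul_cancel hddvd
  have hζd : IsPrimitiveRoot ζ d := by
    rw [hζ]; exact hγ.pow hq1 hsd.symm
  haveI : NeZero d := ⟨hd.ne'⟩
  have hdF : (d : F) ≠ 0 := hζd.neZero'.out
  have hζ0 : ζ ≠ 0 := hζd.ne_zero hd.ne'
  constructor
  · intro i hi x ⟨y, hy, hxy⟩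
    have hyq : y ^ (Fintype.card F - 1) = 1 := FiniteField.pow_card_sub_one_eq_one y hy
    have hxs : x ^ s = ζ ^ i := by
      rw [hxy, mul_pow, ← pow_mul, ← pow_mul, mul_comm d s, hsd, hyq, mul_one,
        mul_comm i s, pow_mul, ← hζ]
    rw [hg]
    simp only [eval_mul, eval_C, eval_finset_sum, eval_pow, eval_X, eval_comp]
    have key : ∀ i' ∈ Finset.range d,
        (∑ j ∈ Finset.range d, (ζ ^ (j * i'))⁻¹ * (x ^ (j * s) * (f i').eval (x ^ s) * (R i').eval x))
        = (if i' = i then (d : F) * ((f i).eval (ζ ^ i) * (R i).eval x) else 0) := by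
      intro i' hi'
      have hsum : ∀ j, (ζ ^ (j * i'))⁻¹ * (x ^ (j * s) * (f i').eval (x ^ s) * (R i').eval x)
          = (((ζ ^ i') ⁻¹ * ζ ^ i) ^ j) * ((f i').eval (ζ ^ i) * (R i').eval x) := by
        intro j
        have h1 : x ^ (j * s) = (ζ ^ i) ^ j := by rw [mul_comm, pow_mul, hxs]
        have h2 : (ζ ^ (j * i'))⁻¹ = ((ζ ^ i')⁻¹) ^ j := by rw [mul_comm, pow_mul, inv_pow]
        rw [h1, h2, hxs, mul_pow]
        ring
      rw [Finset.sum_congr rfl fun j _ => hsum j, ← Finset.sum_mul]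
      by_cases h : i' = i
      · subst h
        simp [inv_mul_cancel₀ (pow_ne_zero i' hζ0), mul_assoc]
      · rw [if_neg h]
        have hw1 : (ζ ^ i')⁻¹ * ζ ^ i ≠ 1 := by
          intro hc
          apply h
          exact hζd.pow_inj (Finset.mem_range.mp hi') hi
            (by field_simp at hc; exact hc.symm)
        have hwd : ((ζ ^ i')⁻¹ * ζ ^ i) ^ d = 1 := by
          rw [mul_pow, inv_pow, ← pow_mul, ← pow_mul, mul_comm i' d, mul_comm i d,
            pow_mul, pow_mul, hζd.pow_eq_one, one_pow, one_pow, inv_one, one_mul]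
        rw [geom_sum_eq hw1, hwd, sub_self, zero_div, zero_mul]
    rw [Finset.sum_congr rfl key, Finset.sum_ite_eq' (Finset.range d) i, if_pos (Finset.mem_range.mpr hi),
      ← mul_assoc, inv_mul_cancel₀ hdF, one_mul]
  · intro hR0
    rw [hg]
    simp only [eval_mul, eval_C, eval_finset_sum, eval_pow, eval_X, eval_comp]
    rw [Finset.sum_congr rfl fun i hi => ?_, Finset.sum_const_zero, mul_zero]
    apply Finset.sum_eq_zero
    intro j _
    rw [← Polynomial.coeff_zero_eq_eval_zero, hR0 i (Finset.mem_range.mp hi), mul_zero, mul_zero]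
end

section
/- Let q be a prime power, γ a primitive element of 𝔽_q, ℓ a positive divisor of q−1, s = (q−1)/ℓ, and ζ = γ^s a primитive ℓ-th root of unity. Let m be a positive integer, u = gcd(m, ℓ), and a ∈ 𝔽_q^* with −a = γ^k for some 0 ≤ k ≤ q−2. Then the number of indices i with 0 ≤ i ≤ ℓ−1 such that ζ^{i m} = −a equals u if (u·s) divides k, and equals 0 otherwise. In particular, x^m + a has a root among the ℓ-th roots of unity in 𝔽_q if and only if ((q−1)·u/ℓ) divides k. -/
open Polynomial Finset

lemma count_mod_fiber (g l r : ℕ) (hl : 0 < l) (hr : r < l) :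
    ((range (l * g)).filter (fun i => i % l = r)).card = g := by
  have h := Finset.card_bij' (s := (range (l * g)).filter (fun i => i % l = r))
    (t := range g) (fun i _ => i / l) (fun t _ => r + l * t)
    (fun i hi => by
      simp only [mem_filter, mem_range] at hi
      simp only [mem_range]
      exact Nat.div_lt_iff_lt_mul hl |>.mpr (by rw [mul_comm]; exact hi.1))
    (fun t ht => by
      simp only [mem_range] at ht
      simp only [mem_filter, mem_range]
      refine ⟨?_, ?_⟩
      · calc r + l * t < l + l * t := by omega
          _ = l * (t + 1) := by ring
          _ ≤ l * g := Nat.mul_le_mul_left l (by omega)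
      · rw [Nat.add_mul_mod_self_left, Nat.mod_eq_of_lt hr])
    (fun i hi => by
      simp only [mem_filter, mem_range] at hi
      have := Nat.mod_add_div i l
      omega)
    (fun t ht => by
      rw [Nat.add_mul_div_left _ _ hl, Nat.div_eq_of_lt hr, zero_add])
  rw [h, card_range]

lemma count_lin (ℓ m c : ℕ) (hℓ : 0 < ℓ) :
    ((range ℓ).filter (fun i => i * m ≡ c [MOD ℓ])).card
      = if Nat.gcd m ℓ ∣ c then Nat.gcd m ℓ else 0 := by
  set g := Nat.gcd m ℓ with hg
  have hg0 : 0 < g := Nat.gcd_pos_of_pos_right m hℓ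
  by_cases hgc : g ∣ c
  · rw [if_pos hgc]
    set m' := m / g with hm'
    set ℓ' := ℓ / g with hℓ'
    have hmm : m' * g = m := Nat.div_mul_cancel (Nat.gcd_dvd_left m ℓ)
    have hll : ℓ' * g = ℓ := Nat.div_mul_cancel (Nat.gcd_dvd_right m ℓ)
    have hcc : c / g * g = c := Nat.div_mul_cancel hgc
    have hℓ'0 : 0 < ℓ' := Nat.div_pos (Nat.le_of_dvd hℓ (Nat.gcd_dvd_right m ℓ)) hg0
    haveI : NeZero ℓ' := ⟨hℓ'0.ne'⟩
    have hco : Nat.Coprime m' ℓ' := Nat.coprime_div_gcd_div_gcd hg0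
    set v : (ZMod ℓ')ˣ := ZMod.unitOfCoprime m' hco with hv
    set x : ZMod ℓ' := ((c / g : ℕ) : ZMod ℓ') * (↑v⁻¹ : ZMod ℓ') with hx
    have hr : x.val < ℓ' := ZMod.val_lt _
    have key : ∀ i : ℕ, (i * m ≡ c [MOD ℓ]) ↔ i % ℓ' = x.val := by
      intro i
      rw [← hmm, ← hcc, ← hll, ← mul_assoc,
        Nat.ModEq.mul_right_cancel_iff' hg0.ne', ← ZMod.natCast_eq_natCast_iff]
      push_cast
      rw [← ZMod.coe_unitOfCoprime m' hco, ← hv, ← Units.eq_mul_inv_iff_mul_eq, ← hx]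
      constructor
      · intro h; rw [← ZMod.val_natCast, h]
      · intro h
        apply ZMod.val_injective
        rw [ZMod.val_natCast]; exact h
    calc ((range ℓ).filter (fun i => i * m ≡ c [MOD ℓ])).card
        = ((range (ℓ' * g)).filter (fun i => i % ℓ' = x.val)).card := by
          rw [hll]
          exact congrArg Finset.card (Finset.filter_congr (fun i _ => by
            exact key i))
      _ = g := count_mod_fiber g ℓ' x.val hℓ'0 hr
  · rw [if_neg hgc]
    rw [Finset.card_eq_zero, Finset.filter_eq_empty_iff]
    intro i _ h
    have h1 : i * m ≡ c [MOD g] := h.of_dvd (Nat.gcd_dvd_right m ℓ)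
    have h2 : i * m ≡ 0 [MOD g] :=
      Nat.modEq_zero_iff_dvd.mpr (Dvd.dvd.mul_left (Nat.gcd_dvd_left m ℓ) i)
    exact hgc (Nat.modEq_zero_iff_dvd.mp (h1.symm.trans h2))


lemma count_key (ℓ s m k : ℕ) (hℓ : 0 < ℓ) (hs : 0 < s) :
    ((range ℓ).filter (fun i => i * (m * s) ≡ k [MOD ℓ * s])).card
      = if Nat.gcd m ℓ * s ∣ k then Nat.gcd m ℓ else 0 := by
  by_cases hsk : s ∣ k
  · obtain ⟨c, rfl⟩ := hsk
    have h1 : ∀ i : ℕ, (i * (m * s) ≡ s * c [MOD ℓ * s]) ↔ i * m ≡ c [MOD ℓ] := by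
      intro i
      rw [show i * (m * s) = i * m * s by ring, show s * c = c * s by ring,
        Nat.ModEq.mul_right_cancel_iff' hs.ne']
    have h2 : (Nat.gcd m ℓ * s ∣ s * c) ↔ Nat.gcd m ℓ ∣ c := by
      rw [mul_comm s c, Nat.mul_dvd_mul_iff_right hs]
    rw [Finset.filter_congr (fun i _ => by exact h1 i), count_lin ℓ m c hℓ]
    exact (if_congr h2 rfl rfl).symm
  · rw [if_neg (fun h => hsk (dvd_trans (dvd_mul_left s _) h))]
    rw [Finset.card_eq_zero, Finset.filter_eq_empty_iff]
    intro i _ h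
    apply hsk
    have h1 : i * (m * s) ≡ k [MOD s] := h.of_dvd (dvd_mul_left s ℓ)
    have h2 : i * (m * s) ≡ 0 [MOD s] := Nat.modEq_zero_iff_dvd.mpr ⟨i * m, by ring⟩
    exact Nat.modEq_zero_iff_dvd.mp (h1.symm.trans h2)

/-- Counting roots of `x^m + a` among `ℓ`-th roots of unity: with `ζ = γ^s`,
`u = gcd(m, ℓ)` and `-a = γ^k`, the number of `0 ≤ i ≤ ℓ-1` with
`ζ^{im} = -a` is `u` if `us ∣ k` and `0` otherwise; in particular `x^m + a`
has a root among the `ℓ`-th roots of unity iff `((q-1)u/ℓ) ∣ k`. -/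
theorem roots_among_roots_of_unity_count
    {F : Type*} [Field F] [Fintype F] [DecidableEq F]
    (γ : F) (hγ : IsPrimitiveRoot γ (Fintype.card F - 1))
    (ℓ : ℕ) (hℓ : 0 < ℓ) (hℓdvd : ℓ ∣ Fintype.card F - 1)
    (s : ℕ) (hs : s = (Fintype.card F - 1) / ℓ)
    (ζ : F) (hζ : ζ = γ ^ s)
    (m : ℕ) (hm : 0 < m)
    (u : ℕ) (hu : u = Nat.gcd m ℓ)
    (a : F) (ha : a ≠ 0)
    (k : ℕ) (hk : k ≤ Fintype.card F - 2) (hka : γ ^ k = -a) :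
    (((Finset.range ℓ).filter (fun i => ζ ^ (i * m) = -a)).card
        = if u * s ∣ k then u else 0) ∧
    ((∃ x : F, x ^ ℓ = 1 ∧ x ^ m + a = 0) ↔
      ((Fintype.card F - 1) * u / ℓ) ∣ k) := by
  have hq : 1 < Fintype.card F := Fintype.one_lt_card
  have hn0 : 0 < Fintype.card F - 1 := by omega
  have hns : Fintype.card F - 1 = ℓ * s := by
    rw [hs]; exact (Nat.mul_div_cancel' hℓdvd).symm
  have hs0 : 0 < s := by
    rcases Nat.eq_zero_or_pos s with h | h
    · rw [h, mul_zero] at hns; omega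
    · exact h
  have hord : orderOf γ = Fintype.card F - 1 := hγ.eq_orderOf.symm
  have hu0 : 0 < u := hu ▸ Nat.gcd_pos_of_pos_right m hℓ
  have hζprim : IsPrimitiveRoot ζ ℓ := hζ ▸ hγ.pow hn0 (by rw [hns, mul_comm])
  have hγu : IsUnit γ := hγ.isUnit hn0.ne'
  have key : ∀ A : ℕ, (γ ^ A = γ ^ k ↔ A ≡ k [MOD ℓ * s]) := by
    intro A
    rw [← hγu.unit_spec, ← Units.val_pow_eq_pow_val, ← Units.val_pow_eq_pow_val,
      ← Units.ext_iff, pow_eq_pow_iff_modEq, ← orderOf_units, hγu.unit_spec, hord, hns]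
  have hcond : ∀ i : ℕ, (ζ ^ (i * m) = -a ↔ i * (m * s) ≡ k [MOD ℓ * s]) := by
    intro i
    rw [hζ, ← pow_mul, ← hka, key, show s * (i * m) = i * (m * s) by ring]
  have hcount : ((Finset.range ℓ).filter (fun i => ζ ^ (i * m) = -a)).card
      = if u * s ∣ k then u else 0 := by
    rw [hu, Finset.filter_congr (fun i _ => by exact hcond i)]
    exact count_key ℓ s m k hℓ hs0
  have hdiv : (Fintype.card F - 1) * u / ℓ = s * u := by
    rw [hns, mul_assoc, Nat.mul_div_cancel_left _ hℓ]
  refine ⟨hcount, ?_⟩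
  rw [hdiv]
  constructor
  · rintro ⟨x, hx1, hx2⟩
    haveI : NeZero ℓ := ⟨hℓ.ne'⟩
    obtain ⟨i, hiℓ, rfl⟩ := hζprim.eq_pow_of_pow_eq_one hx1
    have hmem : i ∈ (Finset.range ℓ).filter (fun i => ζ ^ (i * m) = -a) :=
      Finset.mem_filter.mpr ⟨Finset.mem_range.mpr hiℓ,
        by rw [pow_mul]; exact eq_neg_iff_add_eq_zero.mpr hx2⟩
    have hpos : 0 < ((Finset.range ℓ).filter (fun i => ζ ^ (i * m) = -a)).card :=
      Finset.card_pos.mpr ⟨i, hmem⟩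
    rw [hcount] at hpos
    by_cases hd : u * s ∣ k
    · rwa [mul_comm] at hd
    · rw [if_neg hd] at hpos; omega
  · intro hdk
    have husk : u * s ∣ k := by rwa [mul_comm]
    have hcard : ((Finset.range ℓ).filter (fun i => ζ ^ (i * m) = -a)).card = u := by
      rw [hcount, if_pos husk]
    obtain ⟨i, hi⟩ := Finset.card_pos.mp (by rw [hcard]; exact hu0)
    rw [Finset.mem_filter] at hi
    refine ⟨ζ ^ i, ?_, ?_⟩
    · rw [← pow_mul, mul_comm, pow_mul, hζprim.pow_eq_one, one_pow]
    · rw [← pow_mul, hi.2]; ring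
end

section
/- Let q = p^e be a prime power with p > 3 and 3 dividing q−1, and let ψ : 𝔽_q → ℂ* be a nontrivial additive character. Let g(x) = x^{2(q−1)/3 + 1} + x^{(q−1)/3 + 1} + x ∈ 𝔽_q[x]. Then | Σ_{x ∈ 𝔽_q} ψ(g(x)) − 2q/3 | ≤ √q. -/
open Polynomial Finset

lemma abs_gaussSum_eq_sqrt_card {F : Type*} [Field F] [Fintype F]
    {χ : MulChar F ℂ} (hχ : χ ≠ 1) {ψ : AddChar F ℂ} (hψ : ψ.IsPrimitive) :
    ‖gaussSum χ ψ‖ = Real.sqrt (Fintype.card F) := by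
  have hchar : 0 < ringChar F := Nat.pos_of_ne_zero (CharP.ringChar_ne_zero_of_finite F)
  have hconj : (starRingEnd ℂ) (gaussSum χ ψ) = gaussSum χ⁻¹ ψ⁻¹ := by
    rw [gaussSum, gaussSum, map_sum]
    refine Finset.sum_congr rfl fun x _ => ?_
    rw [map_mul]
    rw [show (starRingEnd ℂ) (χ x) = χ⁻¹ x from MulChar.star_apply' χ x,
      AddChar.starComp_apply hchar x]
  have key := gaussSum_mul_gaussSum_eq_card hχ hψ
  rw [← hconj, Complex.mul_conj] at key
  have h2 : Complex.normSq (gaussSum χ ψ) = (Fintype.card F : ℝ) := by exact_mod_cast key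
  rw [Complex.norm_def, h2]

/-- Example after Theorem 2.1: for `p > 3`, `3 ∣ q - 1`, and
`g(x) = x^{2(q-1)/3 + 1} + x^{(q-1)/3 + 1} + x`,
`|∑_x ψ(g(x)) - 2q/3| ≤ √q`. -/
theorem index_bound_example_index_three
    {p e : ℕ} (hp : p.Prime) (he : 0 < e) (hp3 : 3 < p)
    {F : Type*} [Field F] [Fintype F]
    (hF : Fintype.card F = p ^ e) (h3 : 3 ∣ p ^ e - 1)
    (ψ : AddChar F ℂ) (hψ : ψ ≠ 1) :
    ‖(∑ x : F,
          ψ (x ^ (2 * ((p ^ e - 1) / 3) + 1) + x ^ ((p ^ e - 1) / 3 + 1) + x)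
          - 2 * (p ^ e : ℂ) / 3)‖ ≤
      Real.sqrt (p ^ e) := by
  classical
  set q : ℕ := p ^ e with hqdef
  set d : ℕ := (q - 1) / 3 with hddef
  have h3d : 3 * d = q - 1 := Nat.mul_div_cancel' h3
  have hq2 : 2 ≤ q := by
    have := Fintype.one_lt_card (α := F)
    omega
  have hd0 : d ≠ 0 := by omega
  -- the characteristic of F is p
  have hring : ringChar F = p := by
    obtain ⟨n, hr, hcard⟩ := FiniteField.card F (ringChar F)
    have hpow : ringChar F ^ (n : ℕ) = p ^ e := by rw [← hcard, hF]
    have hdvd : ringChar F ∣ p ^ e := hpow ▸ dvd_pow_self (ringChar F) n.pos.ne'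
    exact (Nat.prime_dvd_prime_iff_eq hr hp).mp (hr.dvd_of_dvd_pow hdvd)
  have h3F : (3 : F) ≠ 0 := by
    intro h
    have := (CharP.cast_eq_zero_iff F (ringChar F) 3).mp (by exact_mod_cast h)
    rw [hring] at this
    have := Nat.le_of_dvd (by norm_num) this
    omega
  -- the cubic character
  obtain ⟨χ, hχord⟩ := MulChar.exists_mulChar_orderOf F (R := ℂ)
    (n := 3) (hF ▸ h3) (Complex.isPrimitiveRoot_exp 3 (by norm_num))
  have hχ1 : χ ≠ 1 := by
    intro h
    rw [h, orderOf_one] at hχord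
    norm_num at hχord
  have hχ3 : χ ^ 3 = 1 := by rw [← hχord]; exact pow_orderOf_eq_one χ
  have hχ2 : χ ^ 2 ≠ 1 := by
    intro h
    have := orderOf_dvd_of_pow_eq_one h
    rw [hχord] at this
    norm_num at this
  -- kernel description
  have hker : ∀ x : F, x ≠ 0 → (χ x = 1 ↔ x ^ d = 1) := by
    obtain ⟨g, hg⟩ := IsCyclic.exists_generator (α := Fˣ)
    have hgord : orderOf g = q - 1 := by
      rw [orderOf_eq_card_of_forall_mem_zpowers hg, Nat.card_eq_fintype_card, Fintype.card_units, hF]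
    have hzg3 : (χ (g : F)) ^ 3 = 1 := by
      have h1 : (χ ^ 3) (g : F) = 1 := by rw [hχ3, MulChar.one_apply_coe]
      rwa [MulChar.pow_apply_coe] at h1
    have hzgne : χ (g : F) ≠ 1 := by
      intro h
      apply hχ1
      apply MulChar.eq_one_iff.mpr
      intro a
      obtain ⟨k, hk⟩ := (Submonoid.mem_powers_iff a g).mp
        ((mem_powers_iff_mem_zpowers).mpr (hg a))
      rw [← hk, Units.val_pow_eq_pow_val, map_pow, h, one_pow]
    have horder : orderOf (χ (g : F)) = 3 := by
      rcases (Nat.prime_three).eq_one_or_self_of_dvd _ (orderOf_dvd_of_pow_eq_one hzg3) with h | h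
      · exact absurd (orderOf_eq_one_iff.mp h) hzgne
      · exact h
    intro x hx
    obtain ⟨k, hk⟩ := (Submonoid.mem_powers_iff (Units.mk0 x hx) g).mp
      ((mem_powers_iff_mem_zpowers).mpr (hg (Units.mk0 x hx)))
    have hxval : x = (g : F) ^ k := by
      rw [← Units.val_pow_eq_pow_val, hk, Units.val_mk0]
    constructor
    · intro h
      have h3k : 3 ∣ k := by
        rw [← horder]
        apply orderOf_dvd_of_pow_eq_one
        rw [← map_pow, ← hxval, h]
      rw [hxval, ← pow_mul, ← Units.val_pow_eq_pow_val,
        Units.val_eq_one, ← orderOf_dvd_iff_pow_eq_one, hgord, ← h3d]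
      exact Nat.mul_dvd_mul h3k dvd_rfl
    · intro h
      have h3k : 3 ∣ k := by
        have : g ^ (k * d) = 1 := by
          rw [← Units.val_eq_one, Units.val_pow_eq_pow_val, pow_mul, ← hxval]
          exact h
        have hdvd : 3 * d ∣ k * d := by
          rw [h3d, ← hgord]
          exact orderOf_dvd_of_pow_eq_one this
        exact (Nat.mul_dvd_mul_iff_right (Nat.pos_of_ne_zero hd0)).mp hdvd
      obtain ⟨m, hm⟩ := h3k
      rw [hxval, map_pow, hm, pow_mul, hzg3, one_pow]
  -- the shifted additive character
  set ψ₃ : AddChar F ℂ := ψ.mulShift 3 with hψ₃def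
  have hψ₃ne : ψ₃ ≠ 1 := by
    intro h
    exact hψ ((AddChar.mulShift_unit_eq_one_iff ψ (h3F.isUnit)).mp h)
  have hψ₃prim : ψ₃.IsPrimitive := AddChar.IsPrimitive.of_ne_one hψ₃ne
  -- pointwise identity
  have hpoint : ∀ x : F,
      ψ (x ^ (2 * d + 1) + x ^ (d + 1) + x)
        = 1 + (1 + χ x + (χ ^ 2) x) * (ψ₃ x - 1) / 3 := by
    intro x
    rcases eq_or_ne x 0 with rfl | hx
    · rw [MulChar.map_zero, MulChar.map_zero]
      have : ψ₃ (0 : F) = 1 := by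
        rw [hψ₃def, AddChar.mulShift_apply, mul_zero, AddChar.map_zero_eq_one]
      rw [this]
      simp [AddChar.map_zero_eq_one]
    · have hpow2 : (χ ^ 2) x = (χ x) ^ 2 := MulChar.pow_apply' χ two_ne_zero x
      have ht3 : (x ^ d) ^ 3 = 1 := by
        rw [← pow_mul, mul_comm d 3, h3d, ← hF]
        exact FiniteField.pow_card_sub_one_eq_one x hx
      have e1 : x ^ (2 * d + 1) = (x ^ d) ^ 2 * x := by
        rw [pow_add, pow_one, pow_mul']
      have e2 : x ^ (d + 1) = x ^ d * x := by rw [pow_add, pow_one]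
      rcases eq_or_ne (x ^ d) 1 with ht | ht
      · have hχx : χ x = 1 := (hker x hx).mpr ht
        have hψ3x : ψ₃ x = ψ (3 * x) := by rw [hψ₃def, AddChar.mulShift_apply]
        rw [e1, e2, ht, hχx, hpow2, hχx]
        rw [show (1 : F) ^ 2 * x + 1 * x + x = 3 * x by ring, ← hψ3x]
        ring
      · have hzero : x ^ (2 * d + 1) + x ^ (d + 1) + x = 0 := by
          have hfac : (x ^ d - 1) * ((x ^ d) ^ 2 + x ^ d + 1) = 0 := by
            linear_combination ht3
          have hsum : (x ^ d) ^ 2 + x ^ d + 1 = 0 := by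
            rcases mul_eq_zero.mp hfac with h | h
            · exact absurd (sub_eq_zero.mp h) ht
            · exact h
          rw [e1, e2]
          linear_combination x * hsum
        have hχx : χ x ≠ 1 := fun h => ht ((hker x hx).mp h)
        have hz3 : (χ x) ^ 3 = 1 := by
          rw [← MulChar.pow_apply' χ (by norm_num) x, hχ3, MulChar.one_apply hx.isUnit]
        have hzsum : 1 + χ x + (χ x) ^ 2 = 0 := by
          have hfac : (χ x - 1) * ((χ x) ^ 2 + χ x + 1) = 0 := by
            linear_combination hz3
          rcases mul_eq_zero.mp hfac with h | h
          · exact absurd (sub_eq_zero.mp h) hχx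
          · linear_combination h
        rw [hzero, AddChar.map_zero_eq_one, hpow2, hzsum]
        ring
  -- summation
  have hsum : ∑ x : F, ψ (x ^ (2 * d + 1) + x ^ (d + 1) + x)
      = (q : ℂ) + (gaussSum χ ψ₃ + gaussSum (χ ^ 2) ψ₃ - q) / 3 := by
    rw [Finset.sum_congr rfl fun x _ => hpoint x]
    have expand : ∀ x : F, 1 + (1 + χ x + (χ ^ 2) x) * (ψ₃ x - 1) / 3
        = 1 + (ψ₃ x + χ x * ψ₃ x + (χ ^ 2) x * ψ₃ x - 1 - χ x - (χ ^ 2) x) / 3 := by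
      intro x; ring
    rw [Finset.sum_congr rfl fun x _ => expand x]
    have hψ0 : ψ ≠ 0 := by
      intro h
      exact hψ (AddChar.eq_one_iff.mpr (AddChar.eq_zero_iff.mp h))
    have hA : ∑ x : F, ψ₃ x = 0 := by
      have h1 : ∑ x : F, ψ₃ x = ∑ x : F, ψ x := by
        simpa [hψ₃def, AddChar.mulShift_apply] using
          Equiv.sum_comp (Equiv.mulLeft₀ (3 : F) h3F) (fun y => ψ y)
      rw [h1]
      exact AddChar.sum_eq_zero_iff_ne_zero.mpr hψ0
    have hD : ∑ x : F, χ x = 0 := MulChar.sum_eq_zero_of_ne_one hχ1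
    have hE : ∑ x : F, (χ ^ 2) x = 0 := MulChar.sum_eq_zero_of_ne_one hχ2
    have hcard : ∑ _x : F, (1 : ℂ) = (q : ℂ) := by
      rw [Finset.sum_const, Finset.card_univ, hF]
      simp [hqdef]
    rw [Finset.sum_add_distrib, ← Finset.sum_div]
    simp only [Finset.sum_sub_distrib, Finset.sum_add_distrib]
    rw [hA, hD, hE, hcard]
    rw [show ∑ x : F, χ x * ψ₃ x = gaussSum χ ψ₃ from rfl,
      show ∑ x : F, (χ ^ 2) x * ψ₃ x = gaussSum (χ ^ 2) ψ₃ from rfl]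
    ring
  -- put everything together
  have habs1 : ‖gaussSum χ ψ₃‖ = Real.sqrt q := by
    rw [abs_gaussSum_eq_sqrt_card hχ1 hψ₃prim, hF]
  have habs2 : ‖gaussSum (χ ^ 2) ψ₃‖ = Real.sqrt q := by
    rw [abs_gaussSum_eq_sqrt_card hχ2 hψ₃prim, hF]
  have hqcast : ((q : ℕ) : ℂ) = (p ^ e : ℂ) := by push_cast [hqdef]; ring
  have hfinal : (∑ x : F,
      ψ (x ^ (2 * ((p ^ e - 1) / 3) + 1) + x ^ ((p ^ e - 1) / 3 + 1) + x))
      - 2 * (p ^ e : ℂ) / 3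
      = (gaussSum χ ψ₃ + gaussSum (χ ^ 2) ψ₃) / 3 := by
    have : ((p ^ e - 1) / 3 : ℕ) = d := rfl
    rw [this, hsum, ← hqcast]
    ring
  rw [hfinal]
  have hb : ‖(gaussSum χ ψ₃ + gaussSum (χ ^ 2) ψ₃) / 3‖
      ≤ (Real.sqrt q + Real.sqrt q) / 3 := by
    rw [norm_div]
    have h3abs : ‖(3 : ℂ)‖ = 3 := by norm_num
    rw [h3abs]
    apply div_le_div_of_nonneg_right ?_ (by norm_num)
    calc ‖gaussSum χ ψ₃ + gaussSum (χ ^ 2) ψ₃‖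
        ≤ ‖gaussSum χ ψ₃‖ + ‖gaussSum (χ ^ 2) ψ₃‖ :=
          norm_add_le _ _
      _ = Real.sqrt q + Real.sqrt q := by rw [habs1, habs2]
  refine hb.trans ?_
  have hs : 0 ≤ Real.sqrt q := Real.sqrt_nonneg _
  rw [hqdef] at hs ⊢
  push_cast
  nlinarith [Real.sqrt_nonneg ((p:ℝ) ^ e)]
end
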